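/- Let q be a prime power and F_q a finite field with q elements. The number of quadruples (a,b,c,d) ∈ F_q^4 such that the binary cubic form aX^3 + bX^2Y + cXY^2 + dY^3 has no nontrivial zero in F_q^2 (i.e., no zero (x,y) ≠ (0,0); equivalently, the form has three conjugate roots in a cubic extension) equals q(q^2−1)(q−1)/3. -/

import Mathlib

/-!
A binary cubic form `aX³ + bX²Y + cXY² + dY³` has no nontrivial zero iff `a ≠ 0` and the
cubic `a r³ + b r² + c r + d` has no root in `F`. Fix `a ≠ 0` and count the rootless `(b, c, d)`
by inclusion–exclusion over sets of prescribed roots: the triples vanishing on `j` distinct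
points form an affine subspace of codimension `j` for `j ≤ 3` (a Vandermonde system), and there
are none for `j ≥ 4`. This gives `q³ - q·q² + C(q,2)·q - C(q,3) = (q³ - q)/3` rootless triples
for each of the `q - 1` nonzero values of `a`.
-/

open Finset

namespace BinaryCubicForm

variable {F : Type*} [Field F]

def dehomEval (a : F) (p : F × F × F) (r : F) : F := a * r ^ 3 + p.1 * r ^ 2 + p.2.1 * r + p.2.2

theorem anisotropic_iff (t : F × F × F × F) :
    (∀ x y : F, t.1 * x ^ 3 + t.2.1 * x ^ 2 * y + t.2.2.1 * x * y ^ 2 + t.2.2.2 * y ^ 3 = 0 →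
      x = 0 ∧ y = 0) ↔ t.1 ≠ 0 ∧ ∀ r, dehomEval t.1 t.2 r ≠ 0 := by
  obtain ⟨a, b, c, d⟩ := t
  simp only [dehomEval]
  constructor
  · intro h
    refine ⟨fun ha => one_ne_zero (h 1 0 (by simp [ha])).1, fun r hr => ?_⟩
    exact one_ne_zero (h r 1 (by linear_combination hr)).2
  · rintro ⟨ha, hroots⟩ x y hxy
    by_cases hy : y = 0
    · subst hy
      have hx3 : x ^ 3 = 0 := (mul_eq_zero.1 (by linear_combination hxy)).resolve_left ha
      exact ⟨pow_eq_zero_iff three_ne_zero |>.1 hx3, rfl⟩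
    · refine absurd ?_ (hroots (x / y))
      have : y ^ 3 * (a * (x / y) ^ 3 + b * (x / y) ^ 2 + c * (x / y) + d) = 0 := by
        field_simp
        linear_combination hxy
      exact (mul_eq_zero.1 this).resolve_left (pow_ne_zero 3 hy)

theorem sum_range_choose_smul_eq_of_eq_zero {M : Type*} [AddCommMonoid M] (n k : ℕ)
    {f : ℕ → M} (hf : ∀ m, k ≤ m → f m = 0) :
    ∑ m ∈ range (n + 1), n.choose m • f m = ∑ m ∈ range k, n.choose m • f m := by
  calc _ = ∑ m ∈ range (n + 1 + k), n.choose m • f m :=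
        sum_subset (range_subset_range.2 (by omega)) fun m _ hm => by
          rw [Nat.choose_eq_zero_of_lt (by simp at hm; omega), zero_smul]
    _ = _ := (sum_subset (range_subset_range.2 (by omega)) fun m _ hm => by
          rw [hf m (by simpa using hm), smul_zero]).symm

theorem card_filter_prod {α β : Type*} [Fintype α] [Fintype β] (P : α → β → Prop)
    [∀ a b, Decidable (P a b)] : #{t : α × β | P t.1 t.2} = ∑ a, #{b | P a b} := by
  simp only [card_filter, Fintype.sum_prod_type]

section Counting

variable [Fintype F] [DecidableEq F]

def zeroLocus (a r : F) : Finset (F × F × F) := {p | dehomEval a p r = 0}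

def rootless (a : F) : Finset (F × F × F) := {p | ∀ r, dehomEval a p r ≠ 0}

@[simp]
theorem mem_zeroLocus {a r : F} {p : F × F × F} : p ∈ zeroLocus a r ↔ dehomEval a p r = 0 := by
  simp [zeroLocus]

theorem mem_inf_zeroLocus {a : F} {T : Finset F} {p : F × F × F} :
    p ∈ T.inf (zeroLocus a) ↔ ∀ r ∈ T, dehomEval a p r = 0 := by
  simp [mem_inf]

theorem rootless_eq_inf_compl_zeroLocus (a : F) :
    rootless a = univ.inf fun r => (zeroLocus a r)ᶜ := by
  ext p
  simp [rootless, mem_inf]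

theorem card_zeroLocus (a r : F) : #(zeroLocus a r) = Fintype.card F ^ 2 := by
  rw [sq, ← Fintype.card_prod, ← card_univ]
  refine card_nbij' (fun p => (p.1, p.2.1))
    (fun bc => (bc.1, bc.2, -(a * r ^ 3 + bc.1 * r ^ 2 + bc.2 * r)))
    (by simp) (fun _ _ => by simp [dehomEval]) (fun p hp => ?_) (fun _ _ => rfl)
  simp only [mem_coe, mem_zeroLocus, dehomEval] at hp
  ext <;> simp only
  linear_combination -hp

theorem card_zeroLocus_inter (a : F) {r s : F} (hrs : r ≠ s) :
    #(zeroLocus a r ∩ zeroLocus a s) = Fintype.card F := by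
  rw [← card_univ]
  let c (b : F) := -(a * (r ^ 2 + r * s + s ^ 2) + b * (r + s))
  refine card_nbij' (fun p => p.1) (fun b => (b, c b, -(a * r ^ 3 + b * r ^ 2 + c b * r)))
    (by simp) (fun _ _ => ?_) (fun p hp => ?_) (fun _ _ => rfl)
  · simp only [coe_inter, Set.mem_inter_iff, mem_coe, mem_zeroLocus, dehomEval, c]
    constructor <;> ring
  · simp only [coe_inter, Set.mem_inter_iff, mem_coe, mem_zeroLocus, dehomEval] at hp
    obtain ⟨hr, hs⟩ := hp
    have hc : p.2.1 = c p.1 := by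
      have : (r - s) * (p.2.1 - c p.1) = 0 := by linear_combination hr - hs
      linear_combination (mul_eq_zero.1 this).resolve_left (sub_ne_zero.2 hrs)
    ext <;> simp only [← hc]
    linear_combination -hr

theorem zeroLocus_inter_inter (a : F) {r s t : F} (hrs : r ≠ s) (hrt : r ≠ t) (hst : s ≠ t) :
    zeroLocus a r ∩ zeroLocus a s ∩ zeroLocus a t =
      {(-(a * (r + s + t)), a * (r * s + r * t + s * t), -(a * r * s * t))} := by
  ext ⟨b, c, d⟩
  simp only [mem_inter, mem_zeroLocus, mem_singleton, Prod.mk.injEq, dehomEval]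
  constructor
  · rintro ⟨⟨hr, hs⟩, ht⟩
    have hrs' : b * (r + s) + c + a * (r ^ 2 + r * s + s ^ 2) = 0 :=
      (mul_eq_zero.1 (by linear_combination hr - hs)).resolve_left (sub_ne_zero.2 hrs)
    have hrt' : b * (r + t) + c + a * (r ^ 2 + r * t + t ^ 2) = 0 :=
      (mul_eq_zero.1 (by linear_combination hr - ht)).resolve_left (sub_ne_zero.2 hrt)
    have hb : b + a * (r + s + t) = 0 :=
      (mul_eq_zero.1 (by linear_combination hrs' - hrt')).resolve_left (sub_ne_zero.2 hst)
    exact ⟨by linear_combination hb, by linear_combination hrs' - (r + s) * hb,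
      by linear_combination hr - (r ^ 2 - r * (r + s)) * hb - r * hrs'⟩
  · rintro ⟨rfl, rfl, rfl⟩
    refine ⟨⟨?_, ?_⟩, ?_⟩ <;> ring

theorem card_le_three_of_mem_inf_zeroLocus {a : F} (ha : a ≠ 0) {T : Finset F}
    {p : F × F × F} (hp : p ∈ T.inf (zeroLocus a)) : #T ≤ 3 := by
  let P : Cubic F := ⟨a, p.1, p.2.1, p.2.2⟩
  refine le_trans (card_le_card fun r hr => ?_) P.card_roots_le
  rw [Multiset.mem_toFinset, Cubic.mem_roots_iff (Cubic.ne_zero_of_a_ne_zero ha)]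
  exact mem_inf_zeroLocus.1 hp r hr

theorem card_inf_zeroLocus {a : F} (ha : a ≠ 0) (T : Finset F) :
    #(T.inf (zeroLocus a)) = if #T ≤ 3 then Fintype.card F ^ (3 - #T) else 0 := by
  split_ifs with hT
  · interval_cases h : #T
    · simp [card_eq_zero.1 h]
      ring
    · obtain ⟨r, rfl⟩ := card_eq_one.1 h
      simp [card_zeroLocus]
    · obtain ⟨r, s, hrs, rfl⟩ := card_eq_two.1 h
      simp [inf_eq_inter, card_zeroLocus_inter a hrs]
    · obtain ⟨r, s, t, hrs, hrt, hst, rfl⟩ := card_eq_three.1 h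
      simp [inf_eq_inter, ← inter_assoc, zeroLocus_inter_inter a hrs hrt hst]
  · exact card_eq_zero.2 <| eq_empty_of_forall_notMem fun p hp =>
      hT (card_le_three_of_mem_inf_zeroLocus ha hp)

theorem card_rootless_eq_inclusion_exclusion {a : F} (ha : a ≠ 0) :
    (#(rootless a) : ℤ) = Fintype.card F ^ 3 - Fintype.card F * Fintype.card F ^ 2
      + (Fintype.card F).choose 2 * Fintype.card F - (Fintype.card F).choose 3 := by
  let g (m : ℕ) : ℤ := (-1) ^ m * if m ≤ 3 then (Fintype.card F : ℤ) ^ (3 - m) else 0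
  have hg : ∀ m, 4 ≤ m → g m = 0 := fun m hm => by simp [g, show ¬ m ≤ 3 by omega]
  calc (#(rootless a) : ℤ)
      = ∑ T ∈ (univ : Finset F).powerset, g #T := by
        rw [rootless_eq_inf_compl_zeroLocus, inclusion_exclusion_card_inf_compl]
        refine sum_congr rfl fun T _ => ?_
        rw [card_inf_zeroLocus ha]
        split_ifs <;> simp [g, *]
    _ = ∑ m ∈ range 4, (Fintype.card F).choose m • g m := by
        rw [sum_powerset_apply_card, card_univ, sum_range_choose_smul_eq_of_eq_zero _ _ hg]
    _ = _ := by
        simp [sum_range_succ, g]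
        ring

theorem three_mul_card_rootless {a : F} (ha : a ≠ 0) :
    3 * #(rootless a) = Fintype.card F * (Fintype.card F ^ 2 - 1) := by
  set q := Fintype.card F
  have hcount : (#(rootless a) : ℚ) = q ^ 3 - q * q ^ 2 + q.choose 2 * q - q.choose 3 := by
    exact_mod_cast card_rootless_eq_inclusion_exclusion ha
  have hchoose3 : (q.choose 3 : ℚ) = q * (q - 1) * (q - 2) / 6 := by
    rw [Nat.cast_choose_eq_descPochhammer_div]
    simp [descPochhammer_succ_right, Nat.factorial]
  rw [← Nat.cast_inj (R := ℚ)]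
  push_cast [Nat.cast_sub (Nat.one_le_pow 2 q Fintype.card_pos)]
  rw [hcount, Nat.cast_choose_two, hchoose3]
  ring

theorem three_mul_card_anisotropic :
    3 * #{t : F × F × F × F | t.1 ≠ 0 ∧ ∀ r, dehomEval t.1 t.2 r ≠ 0} =
      Fintype.card F * (Fintype.card F ^ 2 - 1) * (Fintype.card F - 1) := by
  have hfiber (a : F) : 3 * #{p : F × F × F | a ≠ 0 ∧ ∀ r, dehomEval a p r ≠ 0} =
      if a ≠ 0 then Fintype.card F * (Fintype.card F ^ 2 - 1) else 0 := by
    split_ifs with ha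
    · simpa [rootless, ha] using three_mul_card_rootless ha
    · simp [not_not.1 ha]
  rw [card_filter_prod fun (a : F) p => a ≠ 0 ∧ ∀ r, dehomEval a p r ≠ 0, mul_sum,
    sum_congr rfl fun a _ => hfiber a, sum_ite, sum_const_zero, add_zero, sum_const, filter_ne',
    card_erase_of_mem (mem_univ 0), card_univ, smul_eq_mul, mul_comm]

end Counting

end BinaryCubicForm

open BinaryCubicForm in
/-- The number of binary cubic forms `aX³ + bX²Y + cXY² + dY³` over a finite field `F_q` with
`q` elements having no nontrivial zero in `F_q²` (equivalently, with three conjugate roots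
in a cubic extension) equals `q(q²−1)(q−1)/3`. -/
theorem count_binary_cubics_anisotropic
    (F : Type*) [Field F] [Fintype F] (q : ℕ) (hq : Fintype.card F = q) :
    3 * Nat.card {t : F × F × F × F |
        ∀ x y : F,
          t.1 * x ^ 3 + t.2.1 * x ^ 2 * y + t.2.2.1 * x * y ^ 2 + t.2.2.2 * y ^ 3 = 0 →
            x = 0 ∧ y = 0} =
      q * (q ^ 2 - 1) * (q - 1) := by
  classical
  subst hq
  simp_rw [anisotropic_iff]
  rw [Set.coe_ofPred, Nat.card_eq_fintype_card, Fintype.card_subtype, three_mul_card_anisotropic]
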